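/- arXiv:0806.3944 — 3 statements merged into one kernel-verified Lean document; each statement's English description precedes it below -/
import Mathlib

section
/- For any natural number n ≥ 1, the number of primitive Dirichlet characters modulo n equals n · ∏_{p ∥ n} (1 - 2/p) · ∏_{p² ∣ n} (1 - 1/p)², where p ∥ n means p divides n exactly once. -/
open Filter Finset Real

/-- The number of primitive Dirichlet characters modulo `n`. -/
noncomputable def numPrim (n : ℕ) : ℕ :=
  Nat.card {χ : DirichletCharacter ℂ n // χ.IsPrimitive}

/-- The proportion of Dirichlet characters mod `n` that are primitive. -/
noncomputable def rho (n : ℕ) : ℝ := (numPrim n : ℝ) / (Nat.totient n : ℝ)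

/-- The product of the first `k` primes. -/
noncomputable def nthPrimorial (k : ℕ) : ℕ := ∏ i ∈ Finset.range k, Nat.nth Nat.Prime i

/-- The twin prime constant `C₂ = ∏_{p > 2} p(p-2)/(p-1)²`. -/
noncomputable def twinPrimeConst : ℝ :=
  ∏' p : {p : ℕ // p.Prime ∧ 2 < p},
    (((p : ℕ) : ℝ) * (((p : ℕ) : ℝ) - 2) / (((p : ℕ) : ℝ) - 1) ^ 2)

/-- Chebyshev's theta function `ϑ(x) = ∑_{p ≤ x} log p`. -/
noncomputable def theta (x : ℝ) : ℝ :=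
  ∑ p ∈ Nat.primesBelow (⌊x⌋₊ + 1), Real.log p

/-- The function `f` of Nicolas. -/
noncomputable def ffun (x : ℝ) : ℝ :=
  Real.exp Real.eulerMascheroniConstant * Real.log (theta x) *
    ∏ p ∈ Nat.primesBelow (⌊x⌋₊ + 1), (1 - 1 / (p : ℝ))

/-- The modified function `g`. -/
noncomputable def gfun (x : ℝ) : ℝ :=
  Real.exp Real.eulerMascheroniConstant * Real.log (theta x + Real.log 2) *
    (∏ p ∈ Nat.primesBelow (⌊x⌋₊ + 1), (1 - 1 / (p : ℝ))) *
    ∏' p : {p : ℕ // p.Prime ∧ x < (p : ℝ)},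
      (1 + 1 / (((p : ℕ) : ℝ) * (((p : ℕ) : ℝ) - 2)))

/-!
A character mod `n` of conductor `d` is induced from exactly one primitive character mod `d`, so
`φ n = ∑_{d ∣ n} numPrim d`. By Möbius inversion `numPrim = μ * φ` is multiplicative, and
`numPrim (p ^ k) = φ (p ^ k) - φ (p ^ (k - 1))`, which is `p - 2` for `k = 1` and
`p ^ (k - 2) * (p - 1) ^ 2` for `k ≥ 2`.
-/

namespace DirichletCharacter

variable {R : Type*} [CommMonoidWithZero R]

lemma card_conductor_eq_card_isPrimitive {n d : ℕ} [NeZero n] (hd : d ∣ n) :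
    Nat.card {χ : DirichletCharacter R n // χ.conductor = d} =
      Nat.card {χ : DirichletCharacter R d // χ.IsPrimitive} := by
  have : NeZero d := ⟨fun h => NeZero.ne n (Nat.eq_zero_of_zero_dvd (h ▸ hd))⟩
  refine (Nat.card_congr <| Equiv.ofBijective (fun χ =>
    ⟨changeLevel hd χ.1, (conductor_changeLevel χ.1 hd).trans χ.2⟩) ⟨?_, ?_⟩).symm
  · exact fun χ ψ h => Subtype.ext <| changeLevel_injective hd (congrArg Subtype.val h)
  · rintro ⟨χ, hχ⟩
    obtain ⟨-, χ₀, rfl⟩ : χ.FactorsThrough d := hχ ▸ χ.factorsThrough_conductor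
    exact ⟨⟨χ₀, (conductor_changeLevel χ₀ hd).symm.trans hχ⟩, rfl⟩

lemma card_eq_sum_card_isPrimitive (n : ℕ) [NeZero n] [Finite (DirichletCharacter R n)] :
    Nat.card (DirichletCharacter R n) =
      ∑ d ∈ n.divisors, Nat.card {χ : DirichletCharacter R d // χ.IsPrimitive} := by
  classical
  have := Fintype.ofFinite (DirichletCharacter R n)
  have hmem (χ : DirichletCharacter R n) (_ : χ ∈ univ) : χ.conductor ∈ n.divisors :=
    Nat.mem_divisors.mpr ⟨χ.conductor_dvd_level, NeZero.ne n⟩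
  rw [Nat.card_eq_fintype_card, ← card_univ, card_eq_sum_card_fiberwise hmem]
  refine sum_congr rfl fun d hd => ?_
  rw [← card_conductor_eq_card_isPrimitive (Nat.dvd_of_mem_divisors hd),
    Nat.card_eq_fintype_card, Fintype.card_subtype]

lemma sum_card_isPrimitive_eq_totient (R : Type*) [CommRing R] [IsDomain R] (n : ℕ) [NeZero n]
    [HasEnoughRootsOfUnity R (Monoid.exponent (ZMod n)ˣ)] :
    ∑ d ∈ n.divisors, Nat.card {χ : DirichletCharacter R d // χ.IsPrimitive} = n.totient := by
  rw [← card_eq_sum_card_isPrimitive, card_eq_totient_of_hasEnoughRootsOfUnity]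

end DirichletCharacter

namespace ArithmeticFunction

open scoped ArithmeticFunction.Moebius

lemma moebius_mul_apply_prime_pow {R : Type*} [Ring R] (f : ArithmeticFunction R) {p k : ℕ}
    (hp : p.Prime) (hk : k ≠ 0) :
    ((μ : ArithmeticFunction R) * f) (p ^ k) = f (p ^ k) - f (p ^ (k - 1)) := by
  obtain ⟨k, rfl⟩ := Nat.exists_eq_succ_of_ne_zero hk
  rw [mul_apply, Nat.sum_divisorsAntidiagonal (fun i j => (μ : ArithmeticFunction R) i * f j),
    Nat.sum_divisors_prime_pow hp, sum_range_succ', sum_range_succ']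
  have hsquareful : ∀ i ∈ range k, (μ : ArithmeticFunction R) (p ^ (i + 1 + 1)) *
      f (p ^ (k + 1) / p ^ (i + 1 + 1)) = 0 := fun i _ => by
    rw [intCoe_apply, moebius_apply_prime_pow hp (by omega), if_neg (by omega), Int.cast_zero,
      zero_mul]
  rw [sum_eq_zero hsquareful]
  simp only [pow_zero, zero_add, pow_one, intCoe_apply, moebius_apply_one, moebius_apply_prime hp,
    Nat.div_one, pow_succ p k, Nat.mul_div_cancel _ hp.pos]
  push_cast
  noncomm_ring

def totient : ArithmeticFunction ℕ := ⟨Nat.totient, Nat.totient_zero⟩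

@[simp] lemma totient_apply (n : ℕ) : totient n = n.totient := rfl

lemma isMultiplicative_totient : totient.IsMultiplicative :=
  ⟨Nat.totient_one, Nat.totient_mul⟩

end ArithmeticFunction

open ArithmeticFunction ArithmeticFunction.Moebius

lemma sum_divisors_numPrim {n : ℕ} (hn : n ≠ 0) :
    ∑ d ∈ n.divisors, numPrim d = n.totient := by
  have : NeZero n := ⟨hn⟩
  have : NeZero (Monoid.exponent (ZMod n)ˣ) := ⟨Monoid.exponent_ne_zero_of_finite⟩
  exact DirichletCharacter.sum_card_isPrimitive_eq_totient ℂ n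

lemma numPrim_eq_moebius_mul_totient {n : ℕ} (hn : n ≠ 0) :
    (numPrim n : ℝ) = ((μ : ArithmeticFunction ℝ) * (totient : ArithmeticFunction ℝ)) n := by
  have hsum : ∀ m > 0, ∑ d ∈ m.divisors, (numPrim d : ℝ) = m.totient := fun m hm => by
    exact_mod_cast sum_divisors_numPrim hm.ne'
  rw [← sum_eq_iff_sum_mul_moebius_eq.mp hsum n (Nat.pos_of_ne_zero hn), mul_apply]
  simp

lemma numPrim_eq_prod_primeFactors {n : ℕ} (hn : n ≠ 0) :
    numPrim n = ∏ p ∈ n.primeFactors, numPrim (p ^ n.factorization p) := by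
  have hF := isMultiplicative_moebius.intCast.mul (isMultiplicative_totient.natCast (R := ℝ))
  rw [← Nat.cast_inj (R := ℝ), numPrim_eq_moebius_mul_totient hn,
    hF.multiplicative_factorization _ hn, Nat.prod_factorization_eq_prod_primeFactors,
    Nat.cast_prod]
  exact prod_congr rfl fun p hp => (numPrim_eq_moebius_mul_totient <|
    pow_ne_zero _ (Nat.prime_of_mem_primeFactors hp).ne_zero).symm

lemma numPrim_prime_pow {p k : ℕ} (hp : p.Prime) (hk : k ≠ 0) :
    (numPrim (p ^ k) : ℝ) =
      (p ^ k : ℝ) * if 2 ≤ k then (1 - 1 / (p : ℝ)) ^ 2 else 1 - 2 / (p : ℝ) := by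
  rw [numPrim_eq_moebius_mul_totient (pow_ne_zero k hp.ne_zero),
    moebius_mul_apply_prime_pow _ hp hk, natCoe_apply, natCoe_apply, totient_apply, totient_apply]
  have hp0 : (p : ℝ) ≠ 0 := Nat.cast_ne_zero.mpr hp.ne_zero
  split_ifs with h2
  · obtain ⟨j, rfl⟩ : ∃ j, k = j + 2 := ⟨k - 2, by omega⟩
    rw [Nat.totient_prime_pow_succ hp, show j + 2 - 1 = j + 1 by omega,
      Nat.totient_prime_pow_succ hp]
    push_cast [hp.one_le]
    field_simp
    ring
  · obtain rfl : k = 1 := by omega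
    rw [pow_one, Nat.sub_self, pow_zero, Nat.totient_one, Nat.totient_prime hp]
    push_cast [hp.one_le]
    field_simp
    ring

theorem numPrim_formula (n : ℕ) (hn : 1 ≤ n) :
    (numPrim n : ℝ) =
      (n : ℝ) * (∏ p ∈ n.primeFactors.filter (fun p => ¬ p ^ 2 ∣ n), (1 - 2 / (p : ℝ))) *
        ∏ p ∈ n.primeFactors.filter (fun p => p ^ 2 ∣ n), (1 - 1 / (p : ℝ)) ^ 2 := by
  have hn0 : n ≠ 0 := Nat.one_le_iff_ne_zero.mp hn
  have hlocal : ∀ p ∈ n.primeFactors, (numPrim (p ^ n.factorization p) : ℝ) =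
      (p ^ n.factorization p : ℝ) *
        if p ^ 2 ∣ n then (1 - 1 / (p : ℝ)) ^ 2 else 1 - 2 / (p : ℝ) := by
    intro p hp
    have hp' := Nat.prime_of_mem_primeFactors hp
    have hk := hp'.factorization_pos_of_dvd hn0 (Nat.dvd_of_mem_primeFactors hp)
    rw [numPrim_prime_pow hp' hk.ne']
    simp_rw [hp'.pow_dvd_iff_le_factorization hn0]
  have hn' : (n : ℝ) = ∏ p ∈ n.primeFactors, (p : ℝ) ^ n.factorization p := by
    exact_mod_cast Nat.prod_primeFactors_pow_factorization hn0
  rw [numPrim_eq_prod_primeFactors hn0, Nat.cast_prod, prod_congr rfl hlocal, prod_mul_distrib,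
    prod_ite, hn']
  ring
end

section
/- Define f(x) = e^γ · log ϑ(x) · ∏_{p ≤ x}(1 - 1/p) and g(x) = e^γ · log(ϑ(x) + log 2) · ∏_{p ≤ x}(1 - 1/p) · ∏_{p > x}(1 + 1/(p(p-2))) for x ≥ 2, where ϑ(x) = ∑_{p ≤ x} log p is the Chebyshev theta function. Then for all x > 2 with ϑ(x) > 1, 0 < log(g(x)/f(x)) ≤ (log 2)/(ϑ(x)·log ϑ(x)) + 1/(x - 2). -/
open Filter Finset Real

/-! The quotient `g / f` splits as `(log (ϑ + log 2) / log ϑ) · ∏_{p > x} (1 + 1/(p(p-2)))`.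
The logarithm of the first factor is positive, and `log (1 + t) ≤ t`, applied once to
`log (ϑ + log 2) - log ϑ` and once to the quotient of the two logarithms, bounds it by
`log 2 / (ϑ log ϑ)`. The tail product is `exp` of a sum of nonnegative terms
`log (1 + 1/(p(p-2))) ≤ 1/(p(p-2)) ≤ 1/(p-2) - 1/(p-1)`, which telescopes to at most `1/(x-2)`. -/

lemma exists_mem_Icc_tprod_one_add_eq_exp {ι : Type*} {a : ι → ℝ} {C : ℝ} (ha : ∀ i, 0 ≤ a i)
    (hC : ∀ s : Finset ι, ∑ i ∈ s, a i ≤ C) :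
    ∃ L ∈ Set.Icc 0 C, ∏' i, (1 + a i) = Real.exp L := by
  have hpos (i : ι) : 0 < 1 + a i := by linarith [ha i]
  have hlog_nonneg (i : ι) : 0 ≤ Real.log (1 + a i) := Real.log_nonneg (by linarith [ha i])
  have hlog_le (i : ι) : Real.log (1 + a i) ≤ a i := by
    linarith [Real.log_le_sub_one_of_pos (hpos i)]
  have hsum : Summable fun i ↦ Real.log (1 + a i) :=
    Real.summable_log_one_add_of_summable (summable_of_sum_le ha hC)
  refine ⟨_, ?_, (Real.rexp_tsum_eq_tprod hpos hsum).symm⟩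
  exact ⟨tsum_nonneg hlog_nonneg, Real.tsum_le_of_sum_le hlog_nonneg fun s ↦
    (sum_le_sum fun i _ ↦ hlog_le i).trans (hC s)⟩

lemma log_log_add_div_log_mem_Ioc {t c : ℝ} (ht : 1 < t) (hc : 0 < c) :
    Real.log (Real.log (t + c) / Real.log t) ∈ Set.Ioc 0 (c / (t * Real.log t)) := by
  have hA : 0 < Real.log t := Real.log_pos ht
  have hAB : Real.log t < Real.log (t + c) := Real.log_lt_log (by linarith) (by linarith)
  have hdiff : Real.log (t + c) - Real.log t ≤ c / t := by
    rw [← Real.log_div (by linarith) (by linarith)]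
    calc Real.log ((t + c) / t) ≤ (t + c) / t - 1 := Real.log_le_sub_one_of_pos (by positivity)
      _ = c / t := by field_simp; ring
  refine ⟨Real.log_pos ((one_lt_div hA).2 hAB), ?_⟩
  calc Real.log (Real.log (t + c) / Real.log t)
      ≤ Real.log (t + c) / Real.log t - 1 :=
        Real.log_le_sub_one_of_pos (div_pos (hA.trans hAB) hA)
    _ = (Real.log (t + c) - Real.log t) / Real.log t := by field_simp
    _ ≤ c / t / Real.log t := by gcongr
    _ = c / (t * Real.log t) := div_div _ _ _

lemma one_div_mul_sub_two_le_sub {t : ℝ} (ht : 3 ≤ t) :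
    1 / (t * (t - 2)) ≤ 1 / (t - 2) - 1 / (t - 1) := by
  rw [show 1 / (t - 2) - 1 / (t - 1) = 1 / ((t - 1) * (t - 2)) by
    field_simp [show t - 2 ≠ 0 by linarith, show t - 1 ≠ 0 by linarith]; ring]
  apply one_div_le_one_div_of_le <;> nlinarith

lemma sum_one_div_mul_sub_two_le {m : ℕ} (hm : 3 ≤ m) (s : Finset ℕ) (hs : ∀ n ∈ s, m ≤ n) :
    ∑ n ∈ s, 1 / ((n : ℝ) * (n - 2)) ≤ 1 / ((m : ℝ) - 2) := by
  obtain ⟨N, hmN, hsub⟩ : ∃ N, m ≤ N ∧ s ⊆ Ico m N := ⟨max m (s.sup id + 1), le_max_left _ _,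
    fun n hn ↦ mem_Ico.2 ⟨hs n hn, lt_max_of_lt_right (Nat.lt_succ_of_le (le_sup (f := id) hn))⟩⟩
  have hge (n : ℕ) (hn : n ∈ Ico m N) : (3 : ℝ) ≤ n := by
    exact_mod_cast hm.trans (mem_Ico.1 hn).1
  have hN : (3 : ℝ) ≤ N := by exact_mod_cast hm.trans hmN
  let F (n : ℕ) : ℝ := -(1 / ((n : ℝ) - 2))
  calc ∑ n ∈ s, 1 / ((n : ℝ) * (n - 2))
      ≤ ∑ n ∈ Ico m N, 1 / ((n : ℝ) * (n - 2)) :=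
        sum_le_sum_of_subset_of_nonneg hsub fun n hn _ ↦
          one_div_nonneg.2 (by nlinarith [hge n hn])
    _ ≤ ∑ n ∈ Ico m N, (1 / ((n : ℝ) - 2) - 1 / ((n : ℝ) - 1)) :=
        sum_le_sum fun n hn ↦ one_div_mul_sub_two_le_sub (hge n hn)
    _ = ∑ n ∈ Ico m N, (F (n + 1) - F n) := sum_congr rfl fun n _ ↦ by push_cast [F]; ring_nf
    _ = F N - F m := sum_Ico_sub F hmN
    _ ≤ 1 / ((m : ℝ) - 2) := by
        have : 0 ≤ 1 / ((N : ℝ) - 2) := one_div_nonneg.2 (by linarith)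
        simp only [F]
        linarith

lemma sum_one_div_mul_sub_two_le_of_lt {x : ℝ} (hx : 2 < x) (s : Finset ℕ)
    (hs : ∀ n ∈ s, x < n) : ∑ n ∈ s, 1 / ((n : ℝ) * (n - 2)) ≤ 1 / (x - 2) := by
  have hx0 : 0 ≤ x := by linarith
  have hm : 3 ≤ ⌊x⌋₊ + 1 := by
    have : 2 ≤ ⌊x⌋₊ := Nat.le_floor (by exact_mod_cast hx.le)
    omega
  have hmx : x < ((⌊x⌋₊ + 1 : ℕ) : ℝ) := by exact_mod_cast Nat.lt_floor_add_one x
  calc ∑ n ∈ s, 1 / ((n : ℝ) * (n - 2))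
      ≤ 1 / (((⌊x⌋₊ + 1 : ℕ) : ℝ) - 2) := sum_one_div_mul_sub_two_le hm s fun n hn ↦
        Nat.succ_le_of_lt ((Nat.floor_lt hx0).2 (hs n hn))
    _ ≤ 1 / (x - 2) := one_div_le_one_div_of_le (by linarith) (by linarith)

lemma gfun_div_ffun (x : ℝ) (hθ : Real.log (theta x) ≠ 0) :
    gfun x / ffun x = Real.log (theta x + Real.log 2) / Real.log (theta x) *
      ∏' p : {p : ℕ // p.Prime ∧ x < (p : ℝ)},
        (1 + 1 / (((p : ℕ) : ℝ) * (((p : ℕ) : ℝ) - 2))) := by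
  have hprod : ∏ p ∈ Nat.primesBelow (⌊x⌋₊ + 1), (1 - 1 / (p : ℝ)) ≠ 0 :=
    prod_ne_zero_iff.2 fun p hp ↦ by
      have : (2 : ℝ) ≤ p := by exact_mod_cast (Nat.prime_of_mem_primesBelow hp).two_le
      have : 1 / (p : ℝ) ≤ 1 / 2 := one_div_le_one_div_of_le (by norm_num) this
      linarith
  unfold gfun ffun
  field_simp

theorem log_g_div_f_bounds (x : ℝ) (hx : 2 < x) (htheta : 1 < theta x) :
    0 < Real.log (gfun x / ffun x) ∧
      Real.log (gfun x / ffun x) ≤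
        Real.log 2 / (theta x * Real.log (theta x)) + 1 / (x - 2) := by
  have hterm_nonneg (p : {p : ℕ // p.Prime ∧ x < (p : ℝ)}) :
      0 ≤ 1 / (((p : ℕ) : ℝ) * (((p : ℕ) : ℝ) - 2)) := by
    have : 2 < ((p : ℕ) : ℝ) := hx.trans p.2.2
    exact one_div_nonneg.2 (by nlinarith)
  obtain ⟨hratio_pos, hratio_le⟩ := log_log_add_div_log_mem_Ioc htheta (Real.log_pos one_lt_two)
  obtain ⟨L, ⟨hL_nonneg, hL_le⟩, htail⟩ :=
      exists_mem_Icc_tprod_one_add_eq_exp (C := 1 / (x - 2)) hterm_nonneg fun s ↦ by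
    refine le_of_eq_of_le (sum_map s (Function.Embedding.subtype _)
      fun n : ℕ ↦ 1 / ((n : ℝ) * (n - 2))).symm ?_
    exact sum_one_div_mul_sub_two_le_of_lt hx _ fun n hn ↦ by
      obtain ⟨p, -, rfl⟩ := mem_map.1 hn
      exact p.2.2
  have hratio_ne : Real.log (theta x + Real.log 2) / Real.log (theta x) ≠ 0 := fun h ↦ by
    simp [h] at hratio_pos
  rw [gfun_div_ffun x (Real.log_pos htheta).ne', htail,
    Real.log_mul hratio_ne (Real.exp_ne_zero L), Real.log_exp]
  constructor <;> linarith
end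

section
/- With f and g as in the paper, log g(x) = log f(x) + O(1/x) as x → ∞. More precisely, there exists C > 0 and x₀ such that for all x ≥ x₀, |log g(x) - log f(x)| ≤ C/x. -/
open Filter Finset Real

/-! The constant `e^γ` and the product `∏_{p ≤ x}(1 - 1/p)` cancel in `log g - log f`, which leaves
two nonnegative terms. The first, `log log (ϑ + log 2) - log log ϑ`, is at most `log 2 / ϑ(x)`,
hence `O(1/x)` by Chebyshev's bound `ϑ(x) ≫ x`. The second, the logarithm of
`∏_{p > x}(1 + 1/(p(p-2)))`, is at most `∑_{n > x} 1/(n(n-2)) ≤ ∑_{n > x} 2/n² ≤ 4/x`. -/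

theorem theta_eq_chebyshev_theta (x : ℝ) : theta x = Chebyshev.theta x :=
  (Chebyshev.theta_eq_sum_primesLE x).symm

open Asymptotics

theorem Chebyshev.isLittleO_theta_ge_error :
    (fun x : ℝ => log 2 + log (x + 2) + 2 * √x * log x) =o[atTop] id := by
  have hlog_shift : (fun x : ℝ => log (x + 2)) =o[atTop] id :=
    (isLittleO_log_id_atTop.comp_tendsto (tendsto_atTop_add_const_right atTop 2 tendsto_id)
      ).trans_isBigO ((isBigO_refl id atTop).add (isLittleO_const_id_atTop 2).isBigO)
  have hsqrt_log : (fun x : ℝ => 2 * √x * log x) =o[atTop] id := by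
    have h := (isBigO_refl (fun x : ℝ => 2 * √x) atTop).mul_isLittleO
      (isLittleO_log_rpow_atTop one_half_pos)
    refine (h.congr' .rfl ?_).trans_isBigO ((isBigO_refl id atTop).const_mul_left 2)
    filter_upwards [eventually_ge_atTop 0] with x hx
    rw [← sqrt_eq_rpow, mul_assoc, mul_self_sqrt hx, id]
  exact ((isLittleO_const_id_atTop _).add hlog_shift).add hsqrt_log

theorem Chebyshev.eventually_mul_le_theta {c : ℝ} (hc : c < log 2) :
    ∀ᶠ x in atTop, c * x ≤ Chebyshev.theta x := by
  filter_upwards [Chebyshev.isLittleO_theta_ge_error.bound (sub_pos.2 hc), eventually_ge_atTop 1]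
    with x hbound hx
  have := Chebyshev.theta_ge' hx
  have hlog : 0 ≤ log x := log_nonneg hx
  have hlog2 : 0 ≤ log (x + 2) := log_nonneg (by linarith)
  rw [norm_of_nonneg (by positivity), id, norm_of_nonneg (by linarith)] at hbound
  linarith

theorem Real.log_sub_log_le_div {x y : ℝ} (hx : 0 < x) (hy : 0 < y) :
    log y - log x ≤ (y - x) / x := by
  rw [← log_div hy.ne' hx.ne', sub_div, div_self hx.ne']
  exact log_le_sub_one_of_pos (div_pos hy hx)

theorem Real.log_log_add_sub_log_log_le {t a : ℝ} (ht : exp 1 ≤ t) (ha : 0 ≤ a) :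
    0 ≤ log (log (t + a)) - log (log t) ∧ log (log (t + a)) - log (log t) ≤ a / t := by
  have ht0 : 0 < t := (exp_pos 1).trans_le ht
  have hlogt : 1 ≤ log t := (le_log_iff_exp_le ht0).2 ht
  have hlog_le : log t ≤ log (t + a) := log_le_log ht0 (by linarith)
  refine ⟨sub_nonneg.2 (log_le_log (by linarith) hlog_le), ?_⟩
  calc log (log (t + a)) - log (log t) ≤ (log (t + a) - log t) / log t :=
        log_sub_log_le_div (by linarith) (by linarith)
    _ ≤ log (t + a) - log t := div_le_self (by linarith) hlogt
    _ ≤ (t + a - t) / t := log_sub_log_le_div ht0 (by linarith)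
    _ = a / t := by ring_nf

theorem Real.tprod_one_add_eq_exp_tsum_log {ι : Type*} {f : ι → ℝ} (hf : ∀ i, 0 ≤ f i)
    (hs : Summable f) : ∏' i, (1 + f i) = exp (∑' i, log (1 + f i)) :=
  (rexp_tsum_eq_tprod (fun i => by linarith [hf i]) (summable_log_one_add_of_summable hs)).symm

theorem Real.tsum_log_one_add_le_tsum {ι : Type*} {f : ι → ℝ} (hf : ∀ i, 0 ≤ f i)
    (hs : Summable f) : ∑' i, log (1 + f i) ≤ ∑' i, f i :=
  (summable_log_one_add_of_summable hs).tsum_le_tsum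
    (fun i => by linarith [log_le_sub_one_of_pos (by linarith [hf i] : 0 < 1 + f i)]) hs

theorem one_div_mul_sub_two_le {n : ℝ} (hn : 4 ≤ n) : 1 / (n * (n - 2)) ≤ 2 * (n ^ 2)⁻¹ := by
  rw [div_le_iff₀ (by nlinarith), ← div_eq_mul_inv, div_mul_eq_mul_div, le_div_iff₀ (by positivity)]
  nlinarith

theorem sum_inv_sq_le_of_forall_lt {k : ℕ} (u : Finset ℕ) (hu : ∀ n ∈ u, k < n) :
    ∑ n ∈ u, ((n : ℝ) ^ 2)⁻¹ ≤ 2 / (k + 1) := by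
  calc ∑ n ∈ u, ((n : ℝ) ^ 2)⁻¹ ≤ ∑ n ∈ Finset.Ioo k (u.sup id + 1), ((n : ℝ) ^ 2)⁻¹ := by
        refine sum_le_sum_of_subset_of_nonneg (fun n hn => ?_) (fun _ _ _ => by positivity)
        exact Finset.mem_Ioo.2 ⟨hu n hn, Nat.lt_succ_of_le (Finset.le_sup (f := id) hn)⟩
    _ ≤ 2 / (k + 1) := sum_Ioo_inv_sq_le k _

section TailSum

variable {P : ℕ → Prop} {x : ℝ}

theorem sum_one_div_mul_sub_two_le_s17 (hx : 4 ≤ x) (hP : ∀ n, P n → x < n) (u : Finset {n // P n}) :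
    ∑ n ∈ u, 1 / ((n : ℝ) * ((n : ℝ) - 2)) ≤ 4 / x := by
  have hx0 : 0 < x := by linarith
  have hfloor : ∀ n ∈ u.map (Function.Embedding.subtype P), ⌊x⌋₊ < n := by
    intro n hn
    obtain ⟨m, -, rfl⟩ := Finset.mem_map.1 hn
    exact (Nat.floor_lt hx0.le).2 (hP m m.2)
  calc ∑ n ∈ u, 1 / ((n : ℝ) * ((n : ℝ) - 2))
      ≤ ∑ n ∈ u, 2 * (((n : ℕ) : ℝ) ^ 2)⁻¹ :=
        sum_le_sum fun n _ => one_div_mul_sub_two_le (hx.trans (hP n n.2).le)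
    _ = 2 * ∑ n ∈ u.map (Function.Embedding.subtype P), ((n : ℝ) ^ 2)⁻¹ := by
        rw [mul_sum, sum_map]
        rfl
    _ ≤ 2 * (2 / (⌊x⌋₊ + 1)) := by
        gcongr
        exact sum_inv_sq_le_of_forall_lt _ hfloor
    _ ≤ 4 / x := by
        rw [← mul_div_assoc, show (2 : ℝ) * 2 = 4 by norm_num]
        exact div_le_div_of_nonneg_left (by norm_num) hx0 (Nat.lt_floor_add_one x).le

theorem one_div_mul_sub_two_nonneg (hx : 4 ≤ x) (hP : ∀ n, P n → x < n) :
    ∀ n : {n // P n}, 0 ≤ 1 / ((n : ℝ) * ((n : ℝ) - 2)) := fun n => by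
  have := hP n n.2
  have : (0 : ℝ) < n * (n - 2) := by nlinarith
  positivity

theorem summable_one_div_mul_sub_two (hx : 4 ≤ x) (hP : ∀ n, P n → x < n) :
    Summable fun n : {n // P n} => 1 / ((n : ℝ) * ((n : ℝ) - 2)) :=
  summable_of_sum_le (fun n => one_div_mul_sub_two_nonneg hx hP n)
    (sum_one_div_mul_sub_two_le_s17 hx hP)

theorem tsum_one_div_mul_sub_two_le (hx : 4 ≤ x) (hP : ∀ n, P n → x < n) :
    ∑' n : {n // P n}, 1 / ((n : ℝ) * ((n : ℝ) - 2)) ≤ 4 / x :=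
  Real.tsum_le_of_sum_le (fun n => one_div_mul_sub_two_nonneg hx hP n)
    (sum_one_div_mul_sub_two_le_s17 hx hP)

end TailSum

noncomputable def tailFactor (x : ℝ) : ℝ :=
  ∏' p : {p : ℕ // p.Prime ∧ x < (p : ℝ)}, (1 + 1 / (((p : ℕ) : ℝ) * (((p : ℕ) : ℝ) - 2)))

theorem exists_tailFactor_eq_exp {x : ℝ} (hx : 4 ≤ x) :
    ∃ s, 0 ≤ s ∧ s ≤ 4 / x ∧ tailFactor x = exp s := by
  have hP : ∀ n : ℕ, n.Prime ∧ x < n → x < n := fun _ h => h.2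
  have hf := one_div_mul_sub_two_nonneg hx hP
  have hs := summable_one_div_mul_sub_two hx hP
  refine ⟨_, tsum_nonneg fun p => log_nonneg ?_, ?_, Real.tprod_one_add_eq_exp_tsum_log hf hs⟩
  · linarith [hf p]
  · exact (Real.tsum_log_one_add_le_tsum hf hs).trans (tsum_one_div_mul_sub_two_le hx hP)

theorem log_gfun_sub_log_ffun {x : ℝ} (hθ : 1 < theta x) (hT : 0 < tailFactor x) :
    log (gfun x) - log (ffun x) =
      (log (log (theta x + log 2)) - log (log (theta x))) + log (tailFactor x) := by
  have hprod : 0 < ∏ p ∈ Nat.primesBelow (⌊x⌋₊ + 1), (1 - 1 / (p : ℝ)) :=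
    prod_pos fun p hp =>
      have hp := Nat.prime_of_mem_primesBelow hp
      sub_pos.2 <| (div_lt_one (Nat.cast_pos.2 hp.pos)).2 <| Nat.one_lt_cast.2 hp.one_lt
  have hlogθ : 0 < log (theta x) := log_pos hθ
  have hlogθ' : 0 < log (theta x + log 2) := log_pos (by linarith [log_pos one_lt_two])
  have hc : 0 < exp eulerMascheroniConstant := exp_pos _
  rw [gfun, ffun, ← tailFactor, mul_right_comm _ (log (theta x + log 2)),
    mul_right_comm _ (log (theta x)), log_mul (by positivity) hT.ne', log_mul (by positivity)
    hlogθ'.ne', log_mul (by positivity) hlogθ.ne']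
  ring

theorem log_g_sub_log_f_bigO :
    ∃ C > (0 : ℝ), ∃ x₀ : ℝ, ∀ x : ℝ, x₀ ≤ x →
      |Real.log (gfun x) - Real.log (ffun x)| ≤ C / x := by
  have hlog2 : 0 < log 2 := log_pos one_lt_two
  obtain ⟨x₀, hx₀⟩ := eventually_atTop.1 <|
    (Chebyshev.eventually_mul_le_theta (half_lt_self hlog2)).and
      (eventually_ge_atTop (max 4 (2 * exp 1 / log 2)))
  refine ⟨6, by norm_num, x₀, fun x hx => ?_⟩
  obtain ⟨hθ, hx⟩ := hx₀ x hx
  rw [← theta_eq_chebyshev_theta] at hθ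
  obtain ⟨hx4, hxe⟩ := max_le_iff.1 hx
  have hθe : exp 1 ≤ theta x := by
    rw [div_le_iff₀ hlog2] at hxe
    linarith
  have hθ1 : 1 < theta x := by linarith [add_one_le_exp 1]
  obtain ⟨hA0, hA⟩ := Real.log_log_add_sub_log_log_le hθe hlog2.le
  obtain ⟨s, hs0, hs, hT⟩ := exists_tailFactor_eq_exp hx4
  rw [log_gfun_sub_log_ffun hθ1 (hT ▸ exp_pos s), hT, log_exp,
    abs_of_nonneg (add_nonneg hA0 hs0)]
  calc _ ≤ log 2 / theta x + 4 / x := add_le_add hA hs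
    _ ≤ 2 / x + 4 / x := by
        gcongr ?_ + _
        rw [div_le_div_iff₀ (by linarith) (by linarith)]
        linarith
    _ = 6 / x := by ring
end
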